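/- Let Γ be a group and c a cocycle for the left regular representation. Then for all g, g' ∈ Γ the inner product in ℓ²(Γ×Γ) satisfies ⟨δ_c(g), δ_c(g')⟩ = (if g = g' then ‖c(g)‖² else 0). Consequently, for all finitely supported f, h : Γ → ℂ, ⟨∑_g f(g)·δ_c(g), ∑_g h(g)·δ_c(g)⟩ = ∑_g conj(f(g))·h(g)·‖c(g)‖²; i.e. the generator δ_c*δ_c of the associated Dirichlet form acts diagonally, δ_c*δ_c(γ) = ‖c(γ)‖²·γ. -/

import Mathlib

open scoped ENNReal

/-- Square-summability of `δ_c(g) = (a,b) ↦ c(g)(a)·[a·b = g]`: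
`∑_{(a,b)} |c(g)(a)|²·[a·b = g] = ‖c(g)‖²`. -/
theorem delta_memℓp {Γ : Type*} [Group Γ] [DecidableEq Γ]
    (c : Γ → lp (fun _ : Γ => ℂ) 2) (g : Γ) :
    Memℓp (fun p : Γ × Γ => c g p.1 * (if p.1 * p.2 = g then 1 else 0)) 2 := by
  apply memℓp_gen
  have hinj : Function.Injective (fun a : Γ => ((a, a⁻¹ * g) : Γ × Γ)) := by
    intro a b hab
    simpa using congrArg Prod.fst hab
  have hvan : ∀ p : Γ × Γ, p ∉ Set.range (fun a : Γ => ((a, a⁻¹ * g) : Γ × Γ)) →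
      ‖c g p.1 * (if p.1 * p.2 = g then (1:ℂ) else 0)‖ ^ (2 : ℝ≥0∞).toReal = 0 := by
    intro p hp
    rw [if_neg, mul_zero, norm_zero, Real.zero_rpow (by norm_num)]
    intro hpg
    exact hp ⟨p.1, by simp [← hpg]⟩
  rw [← Function.Injective.summable_iff hinj hvan]
  have hsum : Summable fun a : Γ => ‖c g a‖ ^ (2 : ℝ≥0∞).toReal :=
    (lp.memℓp (c g)).summable (by norm_num)
  apply hsum.congr
  intro a
  simp [Function.comp, mul_inv_cancel_left]

/-- The derivation associated to `c : Γ → ℓ²(Γ)`, as an element of `ℓ²(Γ×Γ)`: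
`δ_c(g)(a,b) = c(g)(a)·[a·b = g]`. -/
noncomputable def delta {Γ : Type*} [Group Γ] [DecidableEq Γ]
    (c : Γ → lp (fun _ : Γ => ℂ) 2) (g : Γ) : lp (fun _ : Γ × Γ => ℂ) 2 :=
  ⟨fun p : Γ × Γ => c g p.1 * (if p.1 * p.2 = g then 1 else 0), delta_memℓp c g⟩

/-- For a cocycle `c` for the left regular representation,
`⟨δ_c(g), δ_c(g')⟩ = [g = g']·‖c(g)‖²` in `ℓ²(Γ×Γ)`, and consequently, for all finitely
supported `f, h : Γ → ℂ`,
`⟨∑_g f(g)·δ_c(g), ∑_g h(g)·δ_c(g)⟩ = ∑_g conj(f(g))·h(g)·‖c(g)‖²`;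
i.e. the generator `δ_c*δ_c` of the associated Dirichlet form acts diagonally,
`δ_c*δ_c(γ) = ‖c(γ)‖²·γ`. -/
theorem delta_inner {Γ : Type*} [Group Γ] [DecidableEq Γ]
    (c : Γ → lp (fun _ : Γ => ℂ) 2)
    (hc : ∀ g h : Γ, ∀ x : Γ, c (g * h) x = c h (g⁻¹ * x) + c g x) :
    (∀ g g' : Γ, (inner ℂ (delta c g) (delta c g') : ℂ) =
      if g = g' then ((‖c g‖ : ℂ)) ^ 2 else 0) ∧
    (∀ f h : Γ →₀ ℂ,
      (inner ℂ (∑ g ∈ f.support, f g • delta c g) (∑ g ∈ h.support, h g • delta c g) : ℂ) =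
        ∑ g ∈ f.support, (starRingEnd ℂ) (f g) * h g * ((‖c g‖ : ℂ)) ^ 2) := by
  have key : ∀ g g' : Γ, (inner ℂ (delta c g) (delta c g') : ℂ) =
      if g = g' then ((‖c g‖ : ℂ)) ^ 2 else 0 := by
    intro g g'
    rw [lp.inner_eq_tsum]
    by_cases hgg' : g = g'
    · subst hgg'
      simp only [if_pos rfl]
      have hinj : Function.Injective (fun a : Γ => ((a, a⁻¹ * g) : Γ × Γ)) := by
        intro a b hab
        simpa using congrArg Prod.fst hab
      have hsupp : Function.support
          (fun p : Γ × Γ => (inner ℂ (delta c g p) (delta c g p) : ℂ)) ⊆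
          Set.range (fun a : Γ => ((a, a⁻¹ * g) : Γ × Γ)) := by
        intro p hp
        by_contra hrange
        apply hp
        have hne : p.1 * p.2 ≠ g := by
          intro hpg
          exact hrange ⟨p.1, by simp [← hpg]⟩
        show (inner ℂ (delta c g p) (delta c g p) : ℂ) = 0
        simp [delta, if_neg hne]
      have := hinj.tsum_eq hsupp
      rw [← this]
      have : ∀ a : Γ, (inner ℂ (delta c g (a, a⁻¹ * g)) (delta c g (a, a⁻¹ * g)) : ℂ) =
          inner ℂ (c g a) (c g a) := by
        intro a
        simp [delta, mul_inv_cancel_left]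
      rw [tsum_congr this, ← lp.inner_eq_tsum]
      rw [@inner_self_eq_norm_sq_to_K ℂ]
      simp
    · rw [if_neg hgg']
      have : ∀ p : Γ × Γ, (inner ℂ (delta c g p) (delta c g' p) : ℂ) = 0 := by
        intro p
        show (delta c g' p) * (starRingEnd ℂ) (delta c g p) = 0
        by_cases h1 : p.1 * p.2 = g
        · have h2 : p.1 * p.2 ≠ g' := by rw [h1]; exact hgg'
          simp [delta, if_neg h2]
        · simp [delta, if_neg h1]
      rw [tsum_congr this, tsum_zero]
  refine ⟨key, fun f h => ?_⟩
  rw [sum_inner, Finset.sum_congr rfl (fun g hg => ?_)]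
  rw [inner_sum]
  have : ∀ g' ∈ h.support, (inner ℂ (f g • delta c g) (h g' • delta c g') : ℂ) =
      if g = g' then (starRingEnd ℂ) (f g) * h g' * ((‖c g‖ : ℂ)) ^ 2 else 0 := by
    intro g' _
    rw [inner_smul_left, inner_smul_right, key g g']
    split_ifs with hgg'
    · ring
    · ring
  rw [Finset.sum_congr rfl this, Finset.sum_ite_eq (h.support) g
      (fun g' => (starRingEnd ℂ) (f g) * h g' * ((‖c g‖ : ℂ)) ^ 2)]
  split_ifs with hmem
  · rfl
  · rw [Finsupp.notMem_support_iff.mp hmem]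
    ring
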